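/- arXiv:2512.16560 — 5 statements merged into one kernel-verified Lean document; each statement's English description precedes it below -/
import Mathlib

section
/- For any permutation π of {1,...,n}, the function Q_{I_n} + Q_π is bent (resp. near-bent) if and only if Q_{I_n} + Q_{π^{-1}} is bent (resp. near-bent), where I_n is the identity permutation. -/
open Finset

/-- Walsh–Hadamard transform (integer-valued) of a Boolean function over an
arbitrary finite index type. -/
def walshOn {ι : Type*} [Fintype ι] [DecidableEq ι]
    (f : (ι → ZMod 2) → ZMod 2) (c : ι → ZMod 2) : ℤ :=
  ∑ x : ι → ZMod 2, (-1 : ℤ) ^ ((f x + ∑ k, c k * x k).val)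

/-- The quadratic function `Q_π(x) = ∑_{i=1}^{n-1} x_{π(i)} x_{π(i+1)}`
(0-indexed). -/
def Qperm (n : ℕ) (π : Equiv.Perm (Fin n)) (x : Fin n → ZMod 2) : ZMod 2 :=
  ∑ i : Fin n, if h : (i : ℕ) + 1 < n then x (π i) * x (π ⟨(i : ℕ) + 1, h⟩) else 0

/-- A Boolean function on `𝔽₂ⁿ` is bent if its Walsh spectrum is `{±2^(n/2)}`. -/
def IsBent (n : ℕ) (f : (Fin n → ZMod 2) → ZMod 2) : Prop :=
  ∀ c, walshOn f c = 2 ^ (n / 2) ∨ walshOn f c = -2 ^ (n / 2)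

/-- A Boolean function on `𝔽₂ⁿ` is near-bent if its Walsh spectrum is
`{0, ±2^((n+1)/2)}`. -/
def IsNearBent (n : ℕ) (f : (Fin n → ZMod 2) → ZMod 2) : Prop :=
  ∀ c, walshOn f c = 0 ∨ walshOn f c = 2 ^ ((n + 1) / 2) ∨
    walshOn f c = -(2 ^ ((n + 1) / 2))

/-- The reverse of a permutation: `π̃(i) = π(n+1-i)` (1-indexed). -/
def reversePerm (n : ℕ) (π : Equiv.Perm (Fin n)) : Equiv.Perm (Fin n) :=
  Fin.revPerm.trans π

/-! Relabelling the variables by `x ↦ x ∘ π` turns `Q_{I_n} + Q_π` into `Q_{π⁻¹} + Q_{I_n}`, and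
precomposing a Boolean function with a coordinate permutation only permutes the arguments of its
Walsh transform, so the two functions have the same Walsh spectrum. -/

section Walsh

variable {ι : Type*} [Fintype ι] [DecidableEq ι]

theorem walshOn_comp_perm (f : (ι → ZMod 2) → ZMod 2) (σ : Equiv.Perm ι) (c : ι → ZMod 2) :
    walshOn (fun x => f (x ∘ σ)) c = walshOn f (c ∘ σ) := by
  unfold walshOn
  refine Fintype.sum_equiv (Equiv.arrowCongr σ.symm (Equiv.refl _)) _ _ fun x => ?_
  have hlin : ∑ k, c k * x k = ∑ k, c (σ k) * x (σ k) :=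
    (Equiv.sum_comp σ fun k => c k * x k).symm
  simp only [hlin]
  rfl

theorem forall_walshOn_comp_perm_iff (P : ℤ → Prop) (f : (ι → ZMod 2) → ZMod 2)
    (σ : Equiv.Perm ι) :
    (∀ c, P (walshOn (fun x => f (x ∘ σ)) c)) ↔ ∀ c, P (walshOn f c) := by
  simp only [walshOn_comp_perm]
  exact ((Equiv.arrowCongr σ (Equiv.refl _)).forall_congr_left
    (p := fun c => P (walshOn f c))).symm

end Walsh

theorem isBent_comp_perm_iff {n : ℕ} (f : (Fin n → ZMod 2) → ZMod 2) (σ : Equiv.Perm (Fin n)) :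
    IsBent n (fun x => f (x ∘ σ)) ↔ IsBent n f :=
  forall_walshOn_comp_perm_iff (fun w => w = 2 ^ (n / 2) ∨ w = -2 ^ (n / 2)) f σ

theorem isNearBent_comp_perm_iff {n : ℕ} (f : (Fin n → ZMod 2) → ZMod 2)
    (σ : Equiv.Perm (Fin n)) :
    IsNearBent n (fun x => f (x ∘ σ)) ↔ IsNearBent n f :=
  forall_walshOn_comp_perm_iff (fun w => w = 0 ∨ w = 2 ^ ((n + 1) / 2) ∨ w = -(2 ^ ((n + 1) / 2)))
    f σ

theorem Qperm_comp_perm (n : ℕ) (π σ : Equiv.Perm (Fin n)) (x : Fin n → ZMod 2) :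
    Qperm n π (x ∘ σ) = Qperm n (σ * π) x :=
  rfl

theorem bent_iff_inverse (n : ℕ) (π : Equiv.Perm (Fin n)) :
    (IsBent n (fun x => Qperm n 1 x + Qperm n π x) ↔
      IsBent n (fun x => Qperm n 1 x + Qperm n π⁻¹ x)) ∧
    (IsNearBent n (fun x => Qperm n 1 x + Qperm n π x) ↔
      IsNearBent n (fun x => Qperm n 1 x + Qperm n π⁻¹ x)) := by
  set g : (Fin n → ZMod 2) → ZMod 2 := fun y => Qperm n 1 y + Qperm n π⁻¹ y
  have hrelabel : (fun x => Qperm n 1 x + Qperm n π x) = fun x => g (x ∘ π) := by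
    funext x
    show _ = Qperm n 1 (x ∘ π) + Qperm n π⁻¹ (x ∘ π)
    rw [Qperm_comp_perm, Qperm_comp_perm, mul_one, mul_inv_cancel, add_comm]
  rw [hrelabel]
  exact ⟨isBent_comp_perm_iff g π, isNearBent_comp_perm_iff g π⟩
end

section
/- Let n ≥ 4 be even, Q a quadratic bent function on 𝔽₂ⁿ, and fix indices i < j and c ∈ 𝔽₂ⁿ. Exactly one of the following holds for the four restricted Walsh values W_{Q|_{u,v}}(c̄), u,v ∈ 𝔽₂: (i) three of them are zero and the remaining one has absolute value 2^{n/2}, which happens iff ∏_{α,β∈𝔽₂} W_Q(c+αe_i+βe_j) = 2^{2n}; or (ii) all four have absolute value 2^{(n−2)/2} with three terms (−1)^{c_i u + c_j v} W_{Q|_{u,v}}(c̄) of one sign and one of the opposite sign, which happens iff ∏_{α,β∈𝔽₂} W_Q(c+αe_i+βe_j) = −2^{2n}. -/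
open Finset

/-- Restriction of a Boolean function on `𝔽₂ⁿ` to the flat `x_i = u, x_j = v`,
viewed as a function on the remaining `n - 2` coordinates. -/
def restrictQ (n : ℕ) (Q : (Fin n → ZMod 2) → ZMod 2) (i j : Fin n) (u v : ZMod 2)
    (y : {k : Fin n // k ≠ i ∧ k ≠ j} → ZMod 2) : ZMod 2 :=
  Q (fun k => if h1 : k = i then u else if h2 : k = j then v else y ⟨k, ⟨h1, h2⟩⟩)

/-- The `i`-th standard basis vector of `𝔽₂ⁿ`. -/
def eVec (n : ℕ) (i : Fin n) : Fin n → ZMod 2 := Pi.single i 1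

/-!
Put `S(u,v) = (-1)^(c_i u + c_j v) W_{Q|u,v}(c̄)`. Splitting off the coordinates `i` and `j`
shows that the four values `W_Q(c + α e_i + β e_j)` are the Walsh–Hadamard transform of `S` on
`𝔽₂²`. Since `Q` is bent they are `2^(n/2) (-1)^b(α,β)` for a Boolean function `b` on `𝔽₂²`, so
Hadamard inversion gives `S = 2^(n/2 - 2) W_b` with `W_b` the Walsh transform of `b`, and the
product of the four values is `2^(2n) (-1)^wt(b)`. Now a Boolean function of two variables is
affine if its weight is even (its spectrum is `±4` at one point and `0` elsewhere) and bent if its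
weight is odd (its spectrum is `±2` everywhere, with an odd number of minus signs).
-/

theorem neg_one_pow_val_add (a b : ZMod 2) :
    (-1 : ℤ) ^ (a + b).val = (-1) ^ a.val * (-1) ^ b.val := by
  revert a b; decide

def pairHadamard (S : ZMod 2 × ZMod 2 → ℤ) (p : ZMod 2 × ZMod 2) : ℤ :=
  ∑ q : ZMod 2 × ZMod 2, (-1 : ℤ) ^ (p.1 * q.1 + p.2 * q.2).val * S q

theorem sum_neg_one_pow_mul_neg_one_pow (p r : ZMod 2 × ZMod 2) :
    ∑ q : ZMod 2 × ZMod 2, (-1 : ℤ) ^ (p.1 * q.1 + p.2 * q.2).val *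
      (-1) ^ (q.1 * r.1 + q.2 * r.2).val = if r = p then 4 else 0 := by
  revert p r; decide

theorem pairHadamard_pairHadamard (S : ZMod 2 × ZMod 2 → ℤ) (p : ZMod 2 × ZMod 2) :
    pairHadamard (pairHadamard S) p = 4 * S p := by
  calc pairHadamard (pairHadamard S) p
      = ∑ r, (∑ q : ZMod 2 × ZMod 2, (-1 : ℤ) ^ (p.1 * q.1 + p.2 * q.2).val *
          (-1) ^ (q.1 * r.1 + q.2 * r.2).val) * S r := by
        simp only [pairHadamard, Finset.mul_sum, Finset.sum_mul, mul_assoc]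
        exact Finset.sum_comm
    _ = 4 * S p := by simp [sum_neg_one_pow_mul_neg_one_pow]

theorem pairHadamard_const_mul (a : ℤ) (S : ZMod 2 × ZMod 2 → ℤ) (p : ZMod 2 × ZMod 2) :
    pairHadamard (fun q => a * S q) p = a * pairHadamard S p := by
  simp only [pairHadamard, Finset.mul_sum, mul_left_comm]

theorem pairHadamard_sign_dichotomy (b : ZMod 2 × ZMod 2 → ZMod 2) :
    (∏ α : ZMod 2, ∏ β : ZMod 2, (-1 : ℤ) ^ (b (α, β)).val = 1 ∧
      ∃ p, pairHadamard (fun q => (-1) ^ (b q).val) p ^ 2 = 16 ∧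
        ∀ q, q ≠ p → pairHadamard (fun q => (-1) ^ (b q).val) q = 0) ∨
    (∏ α : ZMod 2, ∏ β : ZMod 2, (-1 : ℤ) ^ (b (α, β)).val = -1 ∧
      (∀ p, pairHadamard (fun q => (-1) ^ (b q).val) p ^ 2 = 4) ∧
      (#{p | pairHadamard (fun q => (-1) ^ (b q).val) p < 0} = 1 ∨
        #{p | pairHadamard (fun q => (-1) ^ (b q).val) p < 0} = 3)) := by
  revert b; decide

theorem iff_and_iff_of_exclusive_or {A B : Prop} {α : Type*} {a u v : α}
    (h : A ∧ a = u ∨ B ∧ a = v) (huv : u ≠ v) (hAB : A → ¬B) :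
    (A ↔ a = u) ∧ (B ↔ a = v) ∧ (a = u ∨ a = v) := by
  rcases h with ⟨hA, rfl⟩ | ⟨hB, rfl⟩
  · exact ⟨iff_of_true hA rfl, iff_of_false (hAB hA) huv, Or.inl rfl⟩
  · exact ⟨iff_of_false (fun hA => hAB hA hB) huv.symm, iff_of_true hB rfl, Or.inr rfl⟩

theorem exists_sign_pattern_of_pairHadamard {x : ℤ} (S : ZMod 2 × ZMod 2 → ℤ)
    (hS : ∀ q, pairHadamard S q = 2 * x ∨ pairHadamard S q = -(2 * x)) :
    ∃ b : ZMod 2 × ZMod 2 → ZMod 2,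
      (∀ p, 2 * S p = x * pairHadamard (fun q => (-1) ^ (b q).val) p) ∧
      ∏ α : ZMod 2, ∏ β : ZMod 2, pairHadamard S (α, β) =
        (2 * x) ^ 4 * ∏ α : ZMod 2, ∏ β : ZMod 2, (-1 : ℤ) ^ (b (α, β)).val := by
  have hsign : ∀ q, ∃ e : ZMod 2, pairHadamard S q = 2 * x * (-1) ^ e.val := fun q =>
    (hS q).elim (fun h => ⟨0, by simp [h]⟩)
      (fun h => ⟨1, by rw [h, show (1 : ZMod 2).val = 1 from rfl]; ring⟩)
  choose b hb using hsign
  refine ⟨b, fun p => ?_, ?_⟩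
  · have h := pairHadamard_pairHadamard S p
    rw [show pairHadamard S = fun q => 2 * x * (-1) ^ (b q).val from funext hb,
      pairHadamard_const_mul] at h
    linarith
  · simp only [hb, Finset.prod_mul_distrib, Finset.prod_const, Finset.card_univ, ZMod.card]
    ring

theorem pairHadamard_dichotomy {x : ℤ} (hx : 0 < x) (S : ZMod 2 × ZMod 2 → ℤ)
    (hS : ∀ q, pairHadamard S q = 2 * x ∨ pairHadamard S q = -(2 * x)) :
    ((∃ p, S p ^ 2 = (2 * x) ^ 2 ∧ ∀ q, q ≠ p → S q = 0) ↔
        ∏ α : ZMod 2, ∏ β : ZMod 2, pairHadamard S (α, β) = (2 * x) ^ 4) ∧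
    (((∀ p, S p ^ 2 = x ^ 2) ∧ (#{p | S p < 0} = 1 ∨ #{p | S p < 0} = 3)) ↔
        ∏ α : ZMod 2, ∏ β : ZMod 2, pairHadamard S (α, β) = -(2 * x) ^ 4) ∧
    (∏ α : ZMod 2, ∏ β : ZMod 2, pairHadamard S (α, β) = (2 * x) ^ 4 ∨
      ∏ α : ZMod 2, ∏ β : ZMod 2, pairHadamard S (α, β) = -(2 * x) ^ 4) := by
  obtain ⟨b, hSw, hprod⟩ := exists_sign_pattern_of_pairHadamard S hS
  set w := pairHadamard fun q => (-1 : ℤ) ^ (b q).val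
  have hsq : ∀ p, 4 * S p ^ 2 = x ^ 2 * w p ^ 2 := fun p => by
    rw [← mul_pow, ← hSw]; ring
  have hx2 : x ^ 2 ≠ 0 := by positivity
  have hspike : ∀ p, S p ^ 2 = (2 * x) ^ 2 ↔ w p ^ 2 = 16 := fun p => by
    have h4 := hsq p
    constructor <;> intro h
    · exact mul_left_cancel₀ hx2 (by linarith)
    · rw [h] at h4; linarith
  have hflat : ∀ p, S p ^ 2 = x ^ 2 ↔ w p ^ 2 = 4 := fun p => by
    have h4 := hsq p
    constructor <;> intro h
    · exact mul_left_cancel₀ hx2 (by linarith)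
    · rw [h] at h4; linarith
  have hzero : ∀ p, S p = 0 ↔ w p = 0 := fun p =>
    ⟨fun h => by simpa [h, hx.ne'] using (hSw p).symm, fun h => by simpa [h] using hSw p⟩
  have hneg : ∀ p, S p < 0 ↔ w p < 0 := fun p => by
    have := hSw p; constructor <;> intro h <;> nlinarith
  rw [hprod]
  refine iff_and_iff_of_exclusive_or ?_ ?_ ?_
  · rcases pairHadamard_sign_dichotomy b with ⟨hε, hw⟩ | ⟨hε, hw⟩
    · left
      simp only [hspike, hzero, hε, mul_one]
      exact ⟨hw, trivial⟩
    · right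
      simp only [hflat, hneg, hε]
      exact ⟨hw, by ring⟩
  · have : 0 < (2 * x) ^ 4 := by positivity
    linarith
  · rintro ⟨p, -, hq⟩ ⟨hall, -⟩
    obtain ⟨q, hqp⟩ := exists_ne p
    have := hall q
    rw [hq q hqp] at this
    nlinarith

theorem Fintype.sum_eq_add_add_sum_subtype_ne_ne {ι M : Type*} [Fintype ι] [DecidableEq ι]
    [AddCommMonoid M] {i j : ι} (hij : i ≠ j) (g : ι → M) :
    ∑ k, g k = g i + g j + ∑ k : {k : ι // k ≠ i ∧ k ≠ j}, g k := by
  rw [← Finset.sum_compl_add_sum {i, j} g, Finset.sum_pair hij, add_comm,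
    Finset.sum_subtype (p := fun k => k ≠ i ∧ k ≠ j) _ (fun k => by simp) g]

def pairSplitEquiv {ι R : Type*} [DecidableEq ι] {i j : ι} (hij : i ≠ j) :
    (R × R) × ({k : ι // k ≠ i ∧ k ≠ j} → R) ≃ (ι → R) where
  toFun z k := if h1 : k = i then z.1.1 else if h2 : k = j then z.1.2 else z.2 ⟨k, h1, h2⟩
  invFun x := ((x i, x j), fun k => x k)
  left_inv := by
    rintro ⟨⟨u, v⟩, y⟩
    simp only [dite_true, hij.symm, dite_false, Prod.mk.injEq, true_and]
    funext k
    simp [k.2.1, k.2.2]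
  right_inv := by
    intro x
    funext k
    by_cases h1 : k = i
    · simp [h1]
    · by_cases h2 : k = j
      · subst h2; simp [h1]
      · simp [h1, h2]

def signedRestrictWalsh (n : ℕ) (f : (Fin n → ZMod 2) → ZMod 2) (i j : Fin n)
    (c : Fin n → ZMod 2) (p : ZMod 2 × ZMod 2) : ℤ :=
  (-1) ^ (c i * p.1 + c j * p.2).val * walshOn (restrictQ n f i j p.1 p.2) (fun k => c k.1)

section Restriction

variable {n : ℕ} (f : (Fin n → ZMod 2) → ZMod 2) {i j : Fin n} (c : Fin n → ZMod 2)

theorem walshOn_eq_sum_signedRestrictWalsh (hij : i ≠ j) :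
    walshOn f c = ∑ p, signedRestrictWalsh n f i j c p := by
  rw [walshOn, ← (pairSplitEquiv hij).sum_comp, Fintype.sum_prod_type]
  refine Finset.sum_congr rfl fun p _ => ?_
  rw [signedRestrictWalsh, walshOn, Finset.mul_sum]
  refine Finset.sum_congr rfl fun y _ => ?_
  rw [Fintype.sum_eq_add_add_sum_subtype_ne_ne hij, ← neg_one_pow_val_add]
  have hi : pairSplitEquiv hij (p, y) i = p.1 := by simp [pairSplitEquiv]
  have hj : pairSplitEquiv hij (p, y) j = p.2 := by simp [pairSplitEquiv, hij.symm]
  have hk : ∀ k : {k // k ≠ i ∧ k ≠ j}, pairSplitEquiv hij (p, y) k = y k := fun k => by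
    simp [pairSplitEquiv, k.2.1, k.2.2]
  have hres : restrictQ n f i j p.1 p.2 y = f (pairSplitEquiv hij (p, y)) := rfl
  rw [hi, hj, hres]
  simp only [hk]
  ring_nf

theorem signedRestrictWalsh_add_smul_eVec (hij : i ≠ j) (α β : ZMod 2) (p : ZMod 2 × ZMod 2) :
    signedRestrictWalsh n f i j (c + α • eVec n i + β • eVec n j) p =
      (-1) ^ (α * p.1 + β * p.2).val * signedRestrictWalsh n f i j c p := by
  have hk : (fun k : {k // k ≠ i ∧ k ≠ j} => (c + α • eVec n i + β • eVec n j) k.1) =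
      fun k => c k.1 := by
    funext k
    simp [eVec, Pi.single_eq_of_ne k.2.1, Pi.single_eq_of_ne k.2.2]
  simp only [signedRestrictWalsh, hk]
  rw [← mul_assoc, ← neg_one_pow_val_add]
  congr 3
  simp [eVec, Pi.single_eq_of_ne hij, Pi.single_eq_of_ne hij.symm]
  ring

theorem walshOn_add_smul_eVec_add_smul_eVec (hij : i ≠ j) (α β : ZMod 2) :
    walshOn f (c + α • eVec n i + β • eVec n j) =
      pairHadamard (signedRestrictWalsh n f i j c) (α, β) := by
  rw [walshOn_eq_sum_signedRestrictWalsh f _ hij, pairHadamard]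
  simp only [signedRestrictWalsh_add_smul_eVec f c hij]

theorem sq_signedRestrictWalsh (p : ZMod 2 × ZMod 2) :
    signedRestrictWalsh n f i j c p ^ 2 =
      walshOn (restrictQ n f i j p.1 p.2) (fun k => c k.1) ^ 2 := by
  rw [signedRestrictWalsh, mul_pow, ← pow_mul, pow_mul', neg_one_sq, one_pow, one_mul]

theorem signedRestrictWalsh_eq_zero_iff (p : ZMod 2 × ZMod 2) :
    signedRestrictWalsh n f i j c p = 0 ↔
      walshOn (restrictQ n f i j p.1 p.2) (fun k => c k.1) = 0 := by
  simp [signedRestrictWalsh]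

end Restriction

theorem walsh_restriction_dichotomy_general (n : ℕ) (hn : Even n)
    (Q : (Fin n → ZMod 2) → ZMod 2)
    (hbent : IsBent n Q) (i j : Fin n) (hij : i < j) (c : Fin n → ZMod 2) :
    ((∃ p : ZMod 2 × ZMod 2,
        (walshOn (restrictQ n Q i j p.1 p.2) (fun k => c k.1)) ^ 2 = 2 ^ n ∧
        ∀ q : ZMod 2 × ZMod 2, q ≠ p →
          walshOn (restrictQ n Q i j q.1 q.2) (fun k => c k.1) = 0) ↔
      (∏ α : ZMod 2, ∏ β : ZMod 2,
        walshOn Q (c + α • eVec n i + β • eVec n j)) = 2 ^ (2 * n)) ∧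
    (((∀ p : ZMod 2 × ZMod 2,
        (walshOn (restrictQ n Q i j p.1 p.2) (fun k => c k.1)) ^ 2 = 2 ^ (n - 2)) ∧
      ((Finset.univ.filter (fun p : ZMod 2 × ZMod 2 =>
          (-1 : ℤ) ^ ((c i * p.1 + c j * p.2).val) *
            walshOn (restrictQ n Q i j p.1 p.2) (fun k => c k.1) < 0)).card = 1 ∨
       (Finset.univ.filter (fun p : ZMod 2 × ZMod 2 =>
          (-1 : ℤ) ^ ((c i * p.1 + c j * p.2).val) *
            walshOn (restrictQ n Q i j p.1 p.2) (fun k => c k.1) < 0)).card = 3)) ↔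
      (∏ α : ZMod 2, ∏ β : ZMod 2,
        walshOn Q (c + α • eVec n i + β • eVec n j)) = -(2 ^ (2 * n))) ∧
    ((∏ α : ZMod 2, ∏ β : ZMod 2,
        walshOn Q (c + α • eVec n i + β • eVec n j)) = 2 ^ (2 * n) ∨
     (∏ α : ZMod 2, ∏ β : ZMod 2,
        walshOn Q (c + α • eVec n i + β • eVec n j)) = -(2 ^ (2 * n))) := by
  obtain ⟨k, hk⟩ : ∃ k, n = 2 * k + 2 := by
    obtain ⟨m, hm⟩ := hn
    have : (i : ℕ) < j := hij
    exact ⟨m - 1, by omega⟩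
  have hT := walshOn_add_smul_eVec_add_smul_eVec Q c hij.ne
  have hbent' : ∀ q, pairHadamard (signedRestrictWalsh n Q i j c) q = 2 * 2 ^ k ∨
      pairHadamard (signedRestrictWalsh n Q i j c) q = -(2 * 2 ^ k) := by
    have hhalf : (2 : ℤ) ^ (n / 2) = 2 * 2 ^ k := by
      rw [hk, show (2 * k + 2) / 2 = k + 1 by omega, pow_succ, mul_comm]
    rintro ⟨α, β⟩
    rw [← hT, ← hhalf]
    exact hbent _
  have key := pairHadamard_dichotomy (by positivity) _ hbent'
  simp only [sq_signedRestrictWalsh, signedRestrictWalsh_eq_zero_iff, ← hT] at key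
  rw [show (2 : ℤ) ^ n = (2 * 2 ^ k) ^ 2 by rw [hk]; ring,
    show (2 : ℤ) ^ (n - 2) = (2 ^ k) ^ 2 by rw [hk, Nat.add_sub_cancel]; ring,
    show (2 : ℤ) ^ (2 * n) = (2 * 2 ^ k) ^ 4 by rw [hk]; ring]
  exact key

theorem walsh_restriction_dichotomy (n : ℕ) (hn : Even n) (hn4 : 4 ≤ n)
    (Q : (Fin n → ZMod 2) → ZMod 2)
    (hQ0 : Q 0 = 0)
    (hbil : ∀ x x' y : Fin n → ZMod 2,
      Q (x + x' + y) + Q (x + x') + Q y =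
        (Q (x + y) + Q x + Q y) + (Q (x' + y) + Q x' + Q y))
    (hbent : IsBent n Q) (i j : Fin n) (hij : i < j) (c : Fin n → ZMod 2) :
    ((∃ p : ZMod 2 × ZMod 2,
        (walshOn (restrictQ n Q i j p.1 p.2) (fun k => c k.1)) ^ 2 = 2 ^ n ∧
        ∀ q : ZMod 2 × ZMod 2, q ≠ p →
          walshOn (restrictQ n Q i j q.1 q.2) (fun k => c k.1) = 0) ↔
      (∏ α : ZMod 2, ∏ β : ZMod 2,
        walshOn Q (c + α • eVec n i + β • eVec n j)) = 2 ^ (2 * n)) ∧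
    (((∀ p : ZMod 2 × ZMod 2,
        (walshOn (restrictQ n Q i j p.1 p.2) (fun k => c k.1)) ^ 2 = 2 ^ (n - 2)) ∧
      ((Finset.univ.filter (fun p : ZMod 2 × ZMod 2 =>
          (-1 : ℤ) ^ ((c i * p.1 + c j * p.2).val) *
            walshOn (restrictQ n Q i j p.1 p.2) (fun k => c k.1) < 0)).card = 1 ∨
       (Finset.univ.filter (fun p : ZMod 2 × ZMod 2 =>
          (-1 : ℤ) ^ ((c i * p.1 + c j * p.2).val) *
            walshOn (restrictQ n Q i j p.1 p.2) (fun k => c k.1) < 0)).card = 3)) ↔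
      (∏ α : ZMod 2, ∏ β : ZMod 2,
        walshOn Q (c + α • eVec n i + β • eVec n j)) = -(2 ^ (2 * n))) ∧
    ((∏ α : ZMod 2, ∏ β : ZMod 2,
        walshOn Q (c + α • eVec n i + β • eVec n j)) = 2 ^ (2 * n) ∨
     (∏ α : ZMod 2, ∏ β : ZMod 2,
        walshOn Q (c + α • eVec n i + β • eVec n j)) = -(2 ^ (2 * n))) :=
  walsh_restriction_dichotomy_general n hn Q hbent i j hij c
end

section
/- Let n, m be positive integers, π ∈ S_n, ρ ∈ S_m with π(n) = n and ρ(1) = 1. If Q_{I_n} + Q_π is bent on 𝔽₂ⁿ and Q_{I_m} + Q_ρ is bent on 𝔽₂ᵐ (n, m even), then Q_{I_{n+m}} + Q_{πρ^R} is bent on 𝔽₂^{n+m}. -/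
/-!
`Q_π(x)` is the path form `∑ uᵢ uᵢ₊₁` of the sequence `u = x ∘ π`, and the sequence of
`z = (x, y)` under `πρ^R` is the concatenation of those of `x` under `π` and of `y` under `ρ`.
Hence `Q_{πρ^R}(x, y) = Q_π(x) + Q_ρ(y) + x_{π(n)} y_{ρ(1)}`. When `π(n) = n` and `ρ(1) = 1`
the cross term is the one of the identity, so it cancels in characteristic 2 and
`h(x, y) = f(x) + g(y)`. The Walsh transform of such a sum factors as `W_f · W_g`, and
`±2^(n/2) · ±2^(m/2) = ±2^((n+m)/2)` as soon as `n` is even.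
-/

open Finset

/-- The concatenation `πρ^R` of a permutation of `{1,...,n}` with a (shifted)
permutation of `{1,...,m}`. -/
def permConcat (n m : ℕ) (π : Equiv.Perm (Fin n)) (ρ : Equiv.Perm (Fin m)) :
    Equiv.Perm (Fin (n + m)) :=
  finSumFinEquiv.symm.trans ((Equiv.sumCongr π ρ).trans finSumFinEquiv)

section PathForm

variable {R : Type*} [AddCommMonoid R] [Mul R]

def pathForm {n : ℕ} (u : Fin n → R) : R :=
  ∑ i : Fin n, if h : (i : ℕ) + 1 < n then u i * u ⟨i + 1, h⟩ else 0

theorem pathForm_append {n m : ℕ} (hn : 0 < n) (hm : 0 < m) (u : Fin n → R) (v : Fin m → R) :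
    pathForm (Fin.append u v) =
      pathForm u + pathForm v + u ⟨n - 1, Nat.sub_lt hn Nat.one_pos⟩ * v ⟨0, hm⟩ := by
  set last : Fin n := ⟨n - 1, Nat.sub_lt hn Nat.one_pos⟩
  have left (i : Fin n) :
      (if h : (Fin.castAdd m i : ℕ) + 1 < n + m then
          Fin.append u v (Fin.castAdd m i) * Fin.append u v ⟨Fin.castAdd m i + 1, h⟩ else 0) =
        (if h : (i : ℕ) + 1 < n then u i * u ⟨i + 1, h⟩ else 0) +
          if i = last then u i * v ⟨0, hm⟩ else 0 := by
    have hlt : (Fin.castAdd m i : ℕ) + 1 < n + m := by rw [Fin.val_castAdd]; omega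
    rw [dif_pos hlt, Fin.append_left]
    by_cases hi : (i : ℕ) + 1 < n
    · have hne : i ≠ last := Fin.ne_of_val_ne (by simp only [last]; omega)
      have hsucc : (⟨_, hlt⟩ : Fin (n + m)) = Fin.castAdd m ⟨i + 1, hi⟩ := rfl
      rw [dif_pos hi, if_neg hne, add_zero, hsucc, Fin.append_left]
    · have heq : i = last := Fin.ext (by simp only [last]; omega)
      have hsucc : (⟨_, hlt⟩ : Fin (n + m)) = Fin.natAdd n ⟨0, hm⟩ :=
        Fin.ext (by simp only [Fin.val_castAdd, Fin.val_natAdd]; omega)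
      rw [dif_neg hi, if_pos heq, zero_add, hsucc, Fin.append_right]
  have right (j : Fin m) :
      (if h : (Fin.natAdd n j : ℕ) + 1 < n + m then
          Fin.append u v (Fin.natAdd n j) * Fin.append u v ⟨Fin.natAdd n j + 1, h⟩ else 0) =
        if h : (j : ℕ) + 1 < m then v j * v ⟨j + 1, h⟩ else 0 := by
    by_cases hj : (j : ℕ) + 1 < m
    · have hlt : (Fin.natAdd n j : ℕ) + 1 < n + m := by rw [Fin.val_natAdd]; omega
      have hsucc : (⟨_, hlt⟩ : Fin (n + m)) = Fin.natAdd n ⟨j + 1, hj⟩ :=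
        Fin.ext (by simp only [Fin.val_natAdd]; omega)
      rw [dif_pos hlt, dif_pos hj, Fin.append_right, hsucc, Fin.append_right]
    · rw [dif_neg (by rw [Fin.val_natAdd]; omega), dif_neg hj]
  unfold pathForm
  rw [Fin.sum_univ_add, Finset.sum_congr rfl fun i _ => left i,
    Finset.sum_congr rfl fun j _ => right j, Finset.sum_add_distrib,
    Finset.sum_ite_eq' Finset.univ last, if_pos (Finset.mem_univ _)]
  abel

end PathForm

section Walsh

theorem neg_one_pow_val_add_s13 (u v : ZMod 2) :
    (-1 : ℤ) ^ (u + v).val = (-1) ^ u.val * (-1) ^ v.val := by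
  rw [ZMod.val_add, ← neg_one_pow_eq_pow_mod_two, pow_add]

variable {n m : ℕ}

theorem walshOn_append (f : (Fin n → ZMod 2) → ZMod 2) (g : (Fin m → ZMod 2) → ZMod 2)
    (c : Fin (n + m) → ZMod 2) :
    walshOn (fun z => f (z ∘ Fin.castAdd m) + g (z ∘ Fin.natAdd n)) c =
      walshOn f (c ∘ Fin.castAdd m) * walshOn g (c ∘ Fin.natAdd n) := by
  unfold walshOn
  rw [Finset.sum_mul_sum, ← Fintype.sum_prod_type', ← (Fin.appendEquiv n m).sum_comp]
  refine Fintype.sum_congr _ _ fun ⟨x, y⟩ => ?_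
  simp only [Fin.appendEquiv_apply, Function.comp_def, Fin.append_left, Fin.append_right,
    Fin.sum_univ_add]
  rw [← neg_one_pow_val_add_s13, add_add_add_comm]

theorem IsBent.append {f : (Fin n → ZMod 2) → ZMod 2} {g : (Fin m → ZMod 2) → ZMod 2}
    (hf : IsBent n f) (hg : IsBent m g) (hn : Even n) :
    IsBent (n + m) fun z => f (z ∘ Fin.castAdd m) + g (z ∘ Fin.natAdd n) := by
  intro c
  have hpow : (2 : ℤ) ^ ((n + m) / 2) = 2 ^ (n / 2) * 2 ^ (m / 2) := by
    rw [Nat.add_div_of_dvd_right hn.two_dvd, pow_add]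
  rw [walshOn_append, hpow]
  rcases hf (c ∘ Fin.castAdd m) with hf | hf <;> rcases hg (c ∘ Fin.natAdd n) with hg | hg <;>
    simp [hf, hg]

end Walsh

section Concat

variable {n m : ℕ}

theorem Qperm_eq_pathForm (π : Equiv.Perm (Fin n)) (x : Fin n → ZMod 2) :
    Qperm n π x = pathForm (x ∘ π) :=
  rfl

theorem comp_permConcat {α : Type*} (π : Equiv.Perm (Fin n)) (ρ : Equiv.Perm (Fin m))
    (z : Fin (n + m) → α) :
    z ∘ permConcat n m π ρ =
      Fin.append (z ∘ Fin.castAdd m ∘ π) (z ∘ Fin.natAdd n ∘ ρ) := by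
  funext k
  induction k using Fin.addCases <;> simp [permConcat]

theorem permConcat_one : permConcat n m 1 1 = 1 := by
  ext k
  induction k using Fin.addCases <;> simp [permConcat]

theorem Qperm_permConcat (hn : 0 < n) (hm : 0 < m) (π : Equiv.Perm (Fin n))
    (ρ : Equiv.Perm (Fin m)) (z : Fin (n + m) → ZMod 2) :
    Qperm (n + m) (permConcat n m π ρ) z =
      Qperm n π (z ∘ Fin.castAdd m) + Qperm m ρ (z ∘ Fin.natAdd n) +
        z (Fin.castAdd m (π ⟨n - 1, Nat.sub_lt hn Nat.one_pos⟩)) *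
          z (Fin.natAdd n (ρ ⟨0, hm⟩)) := by
  rw [Qperm_eq_pathForm, comp_permConcat, pathForm_append hn hm]
  rfl

theorem Qperm_one_add_Qperm_permConcat (hn : 0 < n) (hm : 0 < m) {π : Equiv.Perm (Fin n)}
    {ρ : Equiv.Perm (Fin m)}
    (hπ : π ⟨n - 1, Nat.sub_lt hn Nat.one_pos⟩ = ⟨n - 1, Nat.sub_lt hn Nat.one_pos⟩)
    (hρ : ρ ⟨0, hm⟩ = ⟨0, hm⟩) (z : Fin (n + m) → ZMod 2) :
    Qperm (n + m) 1 z + Qperm (n + m) (permConcat n m π ρ) z =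
      (Qperm n 1 (z ∘ Fin.castAdd m) + Qperm n π (z ∘ Fin.castAdd m)) +
        (Qperm m 1 (z ∘ Fin.natAdd n) + Qperm m ρ (z ∘ Fin.natAdd n)) := by
  rw [← permConcat_one, Qperm_permConcat hn hm, Qperm_permConcat hn hm, hπ, hρ]
  simp only [Equiv.Perm.one_apply]
  rw [add_add_add_comm (_ + _), CharTwo.add_self_eq_zero, add_zero, add_add_add_comm]

end Concat

theorem bent_concat_fixed_ends_general (n m : ℕ) (hn : 0 < n) (hm : 0 < m)
    (hne : Even n)
    (π : Equiv.Perm (Fin n)) (ρ : Equiv.Perm (Fin m))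
    (hπ : π ⟨n - 1, Nat.sub_lt hn Nat.one_pos⟩ = ⟨n - 1, Nat.sub_lt hn Nat.one_pos⟩)
    (hρ : ρ ⟨0, hm⟩ = ⟨0, hm⟩)
    (hf : IsBent n (fun x => Qperm n 1 x + Qperm n π x))
    (hg : IsBent m (fun y => Qperm m 1 y + Qperm m ρ y)) :
    IsBent (n + m) (fun z => Qperm (n + m) 1 z + Qperm (n + m) (permConcat n m π ρ) z) := by
  simpa only [Qperm_one_add_Qperm_permConcat hn hm hπ hρ] using hf.append hg hne

theorem bent_concat_fixed_ends (n m : ℕ) (hn : 0 < n) (hm : 0 < m)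
    (hne : Even n) (hme : Even m)
    (π : Equiv.Perm (Fin n)) (ρ : Equiv.Perm (Fin m))
    (hπ : π ⟨n - 1, Nat.sub_lt hn Nat.one_pos⟩ = ⟨n - 1, Nat.sub_lt hn Nat.one_pos⟩)
    (hρ : ρ ⟨0, hm⟩ = ⟨0, hm⟩)
    (hf : IsBent n (fun x => Qperm n 1 x + Qperm n π x))
    (hg : IsBent m (fun y => Qperm m 1 y + Qperm m ρ y)) :
    IsBent (n + m) (fun z => Qperm (n + m) 1 z + Qperm (n + m) (permConcat n m π ρ) z) :=
  bent_concat_fixed_ends_general n m hn hm hne π ρ hπ hρ hf hg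
end

section
/- Let m be even, g a quadratic Boolean function on 𝔽₂ᵐ that is bent. Split the Walsh sum at a point b into G₀(b) = Σ_{y: y₁=0} (−1)^{g(y)+b·y} and G₁(b) = Σ_{y: y₁=1} (−1)^{g(y)+b·y}. Then for every b, exactly one of G₀(b), G₁(b) is 0 and the other is ±2^{m/2}. -/
open Finset

lemma pw_neg_one_pow (a : ZMod 2) :
    (-1 : ℤ) ^ ((a + 1).val) = -(-1) ^ (a.val) := by
  fin_cases a <;> decide

/-- Partial Walsh sum of `g` at `b`, restricted to inputs with first
coordinate equal to `u`. -/
def partialWalsh (m : ℕ) (hm : 0 < m) (g : (Fin m → ZMod 2) → ZMod 2)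
    (u : ZMod 2) (b : Fin m → ZMod 2) : ℤ :=
  ∑ y : Fin m → ZMod 2,
    if y ⟨0, hm⟩ = u then (-1 : ℤ) ^ ((g y + ∑ k, b k * y k).val) else 0

theorem partial_walsh_split (m : ℕ) (hm : 0 < m) (hme : Even m)
    (g : (Fin m → ZMod 2) → ZMod 2)
    (hg0 : g 0 = 0)
    (hbil : ∀ x x' y : Fin m → ZMod 2,
      g (x + x' + y) + g (x + x') + g y =
        (g (x + y) + g x + g y) + (g (x' + y) + g x' + g y))
    (hbent : IsBent m g) :
    ∀ b : Fin m → ZMod 2,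
      (partialWalsh m hm g 0 b = 0 ∧
        (partialWalsh m hm g 1 b = 2 ^ (m / 2) ∨
         partialWalsh m hm g 1 b = -(2 ^ (m / 2)))) ∨
      (partialWalsh m hm g 1 b = 0 ∧
        (partialWalsh m hm g 0 b = 2 ^ (m / 2) ∨
         partialWalsh m hm g 0 b = -(2 ^ (m / 2)))) := by
  intro b
  have h01 : ∀ a : ZMod 2, a = 0 ∨ a = 1 := by decide
  set i0 : Fin m := ⟨0, hm⟩ with hi0
  set e0 : Fin m → ZMod 2 := fun k => if k = i0 then 1 else 0 with he0
  have hsum : ∀ y : Fin m → ZMod 2,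
      (∑ k, (b + e0) k * y k) = (∑ k, b k * y k) + y i0 := by
    intro y
    have : (∑ k, (b + e0) k * y k) = (∑ k, b k * y k) + ∑ k, e0 k * y k := by
      rw [← Finset.sum_add_distrib]
      exact Finset.sum_congr rfl fun k _ => by simp [add_mul]
    rw [this]
    congr 1
    simp [he0, ite_mul]
  have hW1 : walshOn g b = partialWalsh m hm g 0 b + partialWalsh m hm g 1 b := by
    unfold walshOn partialWalsh
    rw [← Finset.sum_add_distrib]
    refine Finset.sum_congr rfl fun y _ => ?_
    rcases h01 (y i0) with h | h <;> (rw [hi0] at h; simp [h])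
  have hW2 : walshOn g (b + e0) = partialWalsh m hm g 0 b - partialWalsh m hm g 1 b := by
    unfold walshOn partialWalsh
    rw [← Finset.sum_sub_distrib]
    refine Finset.sum_congr rfl fun y _ => ?_
    rw [hsum y]
    rcases h01 (y i0) with h | h
    · have h' := h; rw [hi0] at h'; simp [h, h']
    · rw [h]
      have : g y + ((∑ k, b k * y k) + 1) = (g y + ∑ k, b k * y k) + 1 := by ring
      rw [this, pw_neg_one_pow]
      simp [h]
  have hb1 := hbent b
  have hb2 := hbent (b + e0)
  rw [hW1] at hb1
  rw [hW2] at hb2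
  rcases hb1 with h1 | h1 <;> rcases hb2 with h2 | h2
  · right; constructor; · linarith
    left; linarith
  · left; constructor; · linarith
    left; linarith
  · left; constructor; · linarith
    right; linarith
  · right; constructor; · linarith
    right; linarith
end

section
/- Let n, m ≥ 4 be even, π ∈ S_n with Q_{I_n}+Q_π bent, ρ ∈ S_m with Q_{I_m}+Q_ρ bent, and suppose ρ(1) = 1 but π(n) ≠ n. Then Q_{I_{n+m}} + Q_{πρ^R} is bent on 𝔽₂^{n+m}. -/
open Finset

lemma zmod2_key (F G S u : ZMod 2) :
    2 * (-1 : ℤ) ^ ((F + G + u * S).val) =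
      (-1:ℤ)^(F.val) * (-1:ℤ)^(G.val) + (-1:ℤ)^(F.val) * (-1:ℤ)^((G+u).val)
      + (-1:ℤ)^((F+S).val) * (-1:ℤ)^(G.val) - (-1:ℤ)^((F+S).val) * (-1:ℤ)^((G+u).val) := by
  revert F G S u; decide

def appendEquiv (n m : ℕ) : ((Fin n → ZMod 2) × (Fin m → ZMod 2)) ≃ (Fin (n+m) → ZMod 2) where
  toFun p := Fin.append p.1 p.2
  invFun z := (fun i => z (Fin.castAdd m i), fun j => z (Fin.natAdd n j))
  left_inv p := by ext i <;> simp
  right_inv z := by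
    funext k
    refine Fin.addCases (fun i => ?_) (fun j => ?_) k <;> simp

lemma sum_append_eq (n m : ℕ) (F : (Fin (n+m) → ZMod 2) → ℤ) :
    ∑ z : Fin (n+m) → ZMod 2, F z
      = ∑ x : Fin n → ZMod 2, ∑ y : Fin m → ZMod 2, F (Fin.append x y) := by
  rw [← Equiv.sum_comp (appendEquiv n m) F, Fintype.sum_prod_type]
  rfl

lemma Qperm_eq_range (N : ℕ) (σ : Equiv.Perm (Fin N)) (z : Fin N → ZMod 2) :
    Qperm N σ z = ∑ i ∈ Finset.range N,
      (if h : i + 1 < N then z (σ ⟨i, Nat.lt_of_succ_lt h⟩) * z (σ ⟨i+1, h⟩) else 0) := by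
  rw [Qperm, ← Fin.sum_univ_eq_sum_range]

lemma partA (n m : ℕ) (hn : 4 ≤ n) (hm : 4 ≤ m)
    (σ : Equiv.Perm (Fin (n+m))) (π : Equiv.Perm (Fin n)) (ρ : Equiv.Perm (Fin m))
    (h1 : ∀ (i : ℕ) (hi : i < n) (hi' : i < n + m), σ ⟨i, hi'⟩ = Fin.castAdd m (π ⟨i, hi⟩))
    (h2 : ∀ (j : ℕ) (hj : j < m) (hj' : n + j < n + m), σ ⟨n + j, hj'⟩ = Fin.natAdd n (ρ ⟨j, hj⟩))
    (h3 : ρ ⟨0, Nat.lt_of_lt_of_le (by norm_num) hm⟩ = (⟨0, Nat.lt_of_lt_of_le (by norm_num) hm⟩ : Fin m))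
    (x : Fin n → ZMod 2) (y : Fin m → ZMod 2) :
    (∑ i ∈ Finset.range n, if h : i + 1 < n + m then
        Fin.append x y (σ ⟨i, Nat.lt_of_succ_lt h⟩) * Fin.append x y (σ ⟨i+1, h⟩) else 0)
    = (∑ i ∈ Finset.range n, if h : i + 1 < n then
        x (π ⟨i, Nat.lt_of_succ_lt h⟩) * x (π ⟨i+1, h⟩) else 0)
      + x (π ⟨n-1, by omega⟩) * y ⟨0, Nat.lt_of_lt_of_le (by norm_num) hm⟩ := by
  obtain ⟨n', rfl⟩ : ∃ n', n = n' + 1 := ⟨n-1, by omega⟩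
  rw [Finset.sum_range_succ, Finset.sum_range_succ]
  rw [dif_neg (by omega : ¬ (n' + 1 < n' + 1)), add_zero]
  rw [dif_pos (by omega : n' + 1 < n' + 1 + m)]
  congr 1
  · refine Finset.sum_congr rfl (fun i hi => ?_)
    rw [Finset.mem_range] at hi
    rw [dif_pos (by omega : i + 1 < n' + 1 + m), dif_pos (by omega : i + 1 < n' + 1)]
    rw [h1 i (by omega) (by omega), h1 (i+1) (by omega) (by omega)]
    simp
  · rw [show (⟨n'+1, by omega⟩ : Fin (n'+1+m)) = ⟨n'+1+0, by omega⟩ from rfl]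
    rw [h1 n' (by omega) (by omega), h2 0 (by omega) (by omega), h3]
    rw [Fin.append_left, Fin.append_right]
    rfl

lemma partB (n m : ℕ) (hn : 4 ≤ n) (hm : 4 ≤ m)
    (σ : Equiv.Perm (Fin (n+m))) (ρ : Equiv.Perm (Fin m))
    (h2 : ∀ (j : ℕ) (hj : j < m) (hj' : n + j < n + m), σ ⟨n + j, hj'⟩ = Fin.natAdd n (ρ ⟨j, hj⟩))
    (x : Fin n → ZMod 2) (y : Fin m → ZMod 2) :
    (∑ j ∈ Finset.range m, if h : n + j + 1 < n + m then
        Fin.append x y (σ ⟨n + j, Nat.lt_of_succ_lt h⟩) * Fin.append x y (σ ⟨n + j + 1, h⟩) else 0)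
    = ∑ j ∈ Finset.range m, if h : j + 1 < m then
        y (ρ ⟨j, Nat.lt_of_succ_lt h⟩) * y (ρ ⟨j+1, h⟩) else 0 := by
  refine Finset.sum_congr rfl (fun j hj => ?_)
  rw [Finset.mem_range] at hj
  by_cases h : j + 1 < m
  · rw [dif_pos h, dif_pos (by omega : n + j + 1 < n + m)]
    rw [show (⟨n + j + 1, by omega⟩ : Fin (n+m)) = ⟨n + (j + 1), by omega⟩ from rfl]
    rw [h2 j (by omega) (by omega), h2 (j+1) (by omega) (by omega)]
    rw [Fin.append_right, Fin.append_right]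
  · rw [dif_neg h, dif_neg (by omega : ¬ (n + j + 1 < n + m))]

lemma Qperm_split (n m : ℕ) (hn : 4 ≤ n) (hm : 4 ≤ m)
    (σ : Equiv.Perm (Fin (n+m))) (π : Equiv.Perm (Fin n)) (ρ : Equiv.Perm (Fin m))
    (h1 : ∀ (i : ℕ) (hi : i < n) (hi' : i < n + m), σ ⟨i, hi'⟩ = Fin.castAdd m (π ⟨i, hi⟩))
    (h2 : ∀ (j : ℕ) (hj : j < m) (hj' : n + j < n + m), σ ⟨n + j, hj'⟩ = Fin.natAdd n (ρ ⟨j, hj⟩))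
    (h3 : ρ ⟨0, Nat.lt_of_lt_of_le (by norm_num) hm⟩ = (⟨0, Nat.lt_of_lt_of_le (by norm_num) hm⟩ : Fin m))
    (x : Fin n → ZMod 2) (y : Fin m → ZMod 2) :
    Qperm (n+m) σ (Fin.append x y) =
      Qperm n π x + Qperm m ρ y + x (π ⟨n-1, by omega⟩) * y ⟨0, Nat.lt_of_lt_of_le (by norm_num) hm⟩ := by
  rw [Qperm_eq_range, Qperm_eq_range, Qperm_eq_range, Finset.sum_range_add]
  rw [partA n m hn hm σ π ρ h1 h2 h3 x y, partB n m hn hm σ ρ h2 x y]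
  ring

theorem bent_concat_rho_fixed_one (n m : ℕ) (hn : 4 ≤ n) (hm : 4 ≤ m)
    (hne : Even n) (hme : Even m)
    (π : Equiv.Perm (Fin n)) (ρ : Equiv.Perm (Fin m))
    (hπ : π ⟨n - 1, by omega⟩ ≠ (⟨n - 1, by omega⟩ : Fin n))
    (hρ : ρ ⟨0, by omega⟩ = (⟨0, by omega⟩ : Fin m))
    (hf : IsBent n (fun x => Qperm n 1 x + Qperm n π x))
    (hg : IsBent m (fun y => Qperm m 1 y + Qperm m ρ y)) :
    IsBent (n + m) (fun z => Qperm (n + m) 1 z + Qperm (n + m) (permConcat n m π ρ) z) := by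
  intro c
  set a : Fin n → ZMod 2 := fun i => c (Fin.castAdd m i) with ha_def
  set b : Fin m → ZMod 2 := fun j => c (Fin.natAdd n j) with hb_def
  set a' : Fin n → ZMod 2 := fun i => a i +
      ((if i = ⟨n-1, by omega⟩ then 1 else 0) + (if i = π ⟨n-1, by omega⟩ then 1 else 0)) with ha'_def
  set b' : Fin m → ZMod 2 := fun j => b j + (if j = ⟨0, by omega⟩ then 1 else 0) with hb'_def
  -- linear-part identities
  have ha' : ∀ x : Fin n → ZMod 2, ∑ k, a' k * x k
      = (∑ k, a k * x k) + (x ⟨n-1, by omega⟩ + x (π ⟨n-1, by omega⟩)) := by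
    intro x
    simp only [ha'_def, add_mul, Finset.sum_add_distrib, ite_mul, one_mul, zero_mul,
      Finset.sum_ite_eq', Finset.mem_univ, if_true]
  have hb'e : ∀ y : Fin m → ZMod 2, ∑ k, b' k * y k
      = (∑ k, b k * y k) + y ⟨0, by omega⟩ := by
    intro y
    simp only [hb'_def, add_mul, Finset.sum_add_distrib, ite_mul, one_mul, zero_mul,
      Finset.sum_ite_eq', Finset.mem_univ, if_true]
  -- decomposition of the quadratic part
  have q1 : ∀ (x : Fin n → ZMod 2) (y : Fin m → ZMod 2),
      Qperm (n+m) 1 (Fin.append x y) = Qperm n 1 x + Qperm m 1 y + x ⟨n-1, by omega⟩ * y ⟨0, by omega⟩ := by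
    intro x y
    have := Qperm_split n m hn hm 1 1 1 (fun i hi hi' => rfl) (fun j hj hj' => rfl) rfl x y
    simpa using this
  have q2 : ∀ (x : Fin n → ZMod 2) (y : Fin m → ZMod 2),
      Qperm (n+m) (permConcat n m π ρ) (Fin.append x y)
        = Qperm n π x + Qperm m ρ y + x (π ⟨n-1, by omega⟩) * y ⟨0, by omega⟩ := by
    intro x y
    refine Qperm_split n m hn hm (permConcat n m π ρ) π ρ ?_ ?_ hρ x y
    · intro i hi hi'
      simp only [permConcat, Equiv.trans_apply, Equiv.sumCongr_apply]
      rw [show finSumFinEquiv.symm (⟨i, hi'⟩ : Fin (n + m)) = Sum.inl (⟨i, hi⟩ : Fin n) from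
        finSumFinEquiv_symm_apply_castAdd (n := m) (m := n) (⟨i, hi⟩ : Fin n)]
      rw [Sum.map_inl, finSumFinEquiv_apply_left]
    · intro j hj hj'
      simp only [permConcat, Equiv.trans_apply, Equiv.sumCongr_apply]
      rw [show finSumFinEquiv.symm (⟨n + j, hj'⟩ : Fin (n + m)) = Sum.inr (⟨j, hj⟩ : Fin m) from
        finSumFinEquiv_symm_apply_natAdd (n := m) (m := n) (⟨j, hj⟩ : Fin m)]
      rw [Sum.map_inr, finSumFinEquiv_apply_right]
  have lin : ∀ (x : Fin n → ZMod 2) (y : Fin m → ZMod 2),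
      ∑ k, c k * Fin.append x y k = (∑ i, a i * x i) + ∑ j, b j * y j := by
    intro x y
    rw [Fin.sum_univ_add]
    simp [ha_def, hb_def]
  -- pointwise identity
  have hpt : ∀ (x : Fin n → ZMod 2) (y : Fin m → ZMod 2),
      2 * (-1:ℤ) ^ ((Qperm (n+m) 1 (Fin.append x y) + Qperm (n+m) (permConcat n m π ρ) (Fin.append x y)
            + ∑ k, c k * Fin.append x y k).val)
      = (-1:ℤ)^(((fun x => Qperm n 1 x + Qperm n π x) x + ∑ k, a k * x k).val)
          * (-1:ℤ)^(((fun y => Qperm m 1 y + Qperm m ρ y) y + ∑ k, b k * y k).val)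
        + (-1:ℤ)^(((fun x => Qperm n 1 x + Qperm n π x) x + ∑ k, a k * x k).val)
          * (-1:ℤ)^(((fun y => Qperm m 1 y + Qperm m ρ y) y + ∑ k, b' k * y k).val)
        + (-1:ℤ)^(((fun x => Qperm n 1 x + Qperm n π x) x + ∑ k, a' k * x k).val)
          * (-1:ℤ)^(((fun y => Qperm m 1 y + Qperm m ρ y) y + ∑ k, b k * y k).val)
        - (-1:ℤ)^(((fun x => Qperm n 1 x + Qperm n π x) x + ∑ k, a' k * x k).val)
          * (-1:ℤ)^(((fun y => Qperm m 1 y + Qperm m ρ y) y + ∑ k, b' k * y k).val) := by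
    intro x y
    have e0 : Qperm (n+m) 1 (Fin.append x y) + Qperm (n+m) (permConcat n m π ρ) (Fin.append x y)
        + ∑ k, c k * Fin.append x y k
        = ((Qperm n 1 x + Qperm n π x) + ∑ k, a k * x k)
          + ((Qperm m 1 y + Qperm m ρ y) + ∑ k, b k * y k)
          + y ⟨0, by omega⟩ * (x ⟨n-1, by omega⟩ + x (π ⟨n-1, by omega⟩)) := by
      rw [q1 x y, q2 x y, lin x y]; ring
    have e1 : (Qperm n 1 x + Qperm n π x) + ∑ k, a' k * x k
        = ((Qperm n 1 x + Qperm n π x) + ∑ k, a k * x k) + (x ⟨n-1, by omega⟩ + x (π ⟨n-1, by omega⟩)) := by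
      rw [ha' x]; ring
    have e2 : (Qperm m 1 y + Qperm m ρ y) + ∑ k, b' k * y k
        = ((Qperm m 1 y + Qperm m ρ y) + ∑ k, b k * y k) + y ⟨0, by omega⟩ := by
      rw [hb'e y]; ring
    simp only []
    rw [e0, e1, e2]
    exact zmod2_key _ _ _ _
  -- main Walsh identity
  have hW : 2 * walshOn (fun z => Qperm (n + m) 1 z + Qperm (n + m) (permConcat n m π ρ) z) c
      = walshOn (fun x => Qperm n 1 x + Qperm n π x) a * walshOn (fun y => Qperm m 1 y + Qperm m ρ y) b
      + walshOn (fun x => Qperm n 1 x + Qperm n π x) a * walshOn (fun y => Qperm m 1 y + Qperm m ρ y) b'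
      + walshOn (fun x => Qperm n 1 x + Qperm n π x) a' * walshOn (fun y => Qperm m 1 y + Qperm m ρ y) b
      - walshOn (fun x => Qperm n 1 x + Qperm n π x) a' * walshOn (fun y => Qperm m 1 y + Qperm m ρ y) b' := by
    simp only [walshOn]
    rw [sum_append_eq n m, Finset.sum_mul_sum, Finset.sum_mul_sum, Finset.sum_mul_sum,
      Finset.sum_mul_sum]
    rw [← Finset.sum_add_distrib, ← Finset.sum_add_distrib, ← Finset.sum_sub_distrib,
      Finset.mul_sum]
    refine Finset.sum_congr rfl (fun x _ => ?_)
    rw [← Finset.sum_add_distrib, ← Finset.sum_add_distrib, ← Finset.sum_sub_distrib,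
      Finset.mul_sum]
    refine Finset.sum_congr rfl (fun y _ => ?_)
    exact hpt x y
  -- conclude
  have hpow : (2:ℤ) ^ ((n+m)/2) = 2 ^ (n/2) * 2 ^ (m/2) := by
    rw [← pow_add]
    congr 1
    obtain ⟨k, hk⟩ := hne
    obtain ⟨l, hl⟩ := hme
    omega
  obtain hA | hA := hf a <;> obtain hA' | hA' := hf a' <;>
    obtain hB | hB := hg b <;> obtain hB' | hB' := hg b' <;>
    rw [hA, hA', hB, hB'] at hW <;>
    first
    | (left; rw [hpow]; linarith)
    | (right; rw [hpow]; linarith)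
end
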